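/- arXiv:2208.05653 — 2 statements merged into one kernel-verified Lean document; each statement's English description precedes it below -/
import Mathlib

section
/- Let (A, ∫_A) be an oriented Artinian Gorenstein algebra of socle degree d over ℝ, let U ⊆ A_1, and let 0 ≤ i ≤ ⌊d/2⌋. If A satisfies the mixed strong Lefschetz property mixed SL_i on U, then for each 0 ≤ j ≤ i and each choice of ℓ_0, ℓ_1, …, ℓ_{d−2j} ∈ U with ℒ = (ℓ_1, …, ℓ_{d−2j}), one has dim_ℝ P_{j,ℓ_0}^ℒ = h_j − h_{j−1} and A_j = P_{j,ℓ_0}^ℒ ⊕ ℓ_0·A_{j−1}, and this decomposition is orthogonal with respect to the j-th mixed Lefschetz form (α,β)_j^ℒ. -/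
/-!
For `j ≥ 1`, apply mixed `SL_{j-1}` to the sequence `(ℓ₀, ℓ₀, ℓ₁, …, ℓ_{d−2j})`: multiplication by
`ℓ₀ · (ℓ₀ℓ₁⋯ℓ_{d−2j})` maps `A_{j−1}` bijectively onto `A_{d−j+1}`. It factors as `×ℓ₀ : A_{j−1} → A_j`
followed by `×(ℓ₀ℓ₁⋯ℓ_{d−2j}) : A_j → A_{d−j+1}`, and a composite `g ∘ f` that is injective on the source
with the image of `g` covered splits the middle space as `ker g ⊕ im f`. Orthogonality is immediate:
`(ℓ₁⋯ℓ_{d−2j} α)(ℓ₀ γ) = (ℓ₀ℓ₁⋯ℓ_{d−2j} α) γ = 0` for primitive `α`. For `j = 0` the operator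
`ℓ₀ℓ₁⋯ℓ_d` has degree `d + 1`, so it vanishes and `P_0 = A_0`.
-/

namespace Submodule

section Splitting

variable {R M N P : Type*} [Ring R] [AddCommGroup M] [AddCommGroup N] [AddCommGroup P]
  [Module R M] [Module R N] [Module R P]
  {f : N →ₗ[R] M} {g : M →ₗ[R] P} {W : Submodule R N} {V : Submodule R M}

theorem inf_ker_sup_map_eq (hmap : W.map f ≤ V)
    (hsurj : ∀ v ∈ V, ∃ w ∈ W, g (f w) = g v) :
    V ⊓ LinearMap.ker g ⊔ W.map f = V := by
  refine le_antisymm (sup_le inf_le_left hmap) fun v hv ↦ ?_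
  obtain ⟨w, hw, hgw⟩ := hsurj v hv
  have hfw : f w ∈ V := hmap ⟨w, hw, rfl⟩
  have hker : v - f w ∈ V ⊓ LinearMap.ker g :=
    ⟨sub_mem hv hfw, by simp [LinearMap.mem_ker, hgw]⟩
  simpa using add_mem_sup hker (mem_map_of_mem (f := f) hw)

theorem disjoint_ker_map (hinj : ∀ w ∈ W, g (f w) = 0 → w = 0) :
    Disjoint (LinearMap.ker g) (W.map f) := by
  rw [disjoint_def]
  rintro _ hker ⟨w, hw, rfl⟩
  simp [hinj w hw hker]

end Splitting

theorem finrank_inf_ker_eq_sub {K M N P : Type*} [Field K] [AddCommGroup M] [AddCommGroup N]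
    [AddCommGroup P] [Module K M] [Module K N] [Module K P]
    {f : N →ₗ[K] M} {g : M →ₗ[K] P} {W : Submodule K N} {V : Submodule K M}
    [FiniteDimensional K V] (hmap : W.map f ≤ V)
    (hinj : ∀ w ∈ W, g (f w) = 0 → w = 0) (hsurj : ∀ v ∈ V, ∃ w ∈ W, g (f w) = g v) :
    Module.finrank K ↥(V ⊓ LinearMap.ker g) = Module.finrank K V - Module.finrank K W := by
  have : FiniteDimensional K ↥(V ⊓ LinearMap.ker g) := finiteDimensional_of_le inf_le_left
  have : FiniteDimensional K ↥(W.map f) := finiteDimensional_of_le hmap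
  have hf : Disjoint W (LinearMap.ker f) := LinearMap.disjoint_ker.mpr fun w hw hfw ↦
    hinj w hw (by rw [hfw, map_zero])
  have hrank : Module.finrank K ↥(W.map f) = Module.finrank K W := by
    rw [← LinearMap.range_domRestrict]
    exact LinearMap.finrank_range_of_inj (LinearMap.injective_domRestrict_iff.mpr hf)
  have hsum := finrank_sup_add_finrank_inf_eq (V ⊓ LinearMap.ker g) (W.map f)
  rw [inf_ker_sup_map_eq hmap hsurj, hrank,
    ((disjoint_ker_map hinj).mono_left inf_le_right).eq_bot, finrank_bot] at hsum
  omega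

end Submodule

section Graded

variable {R A : Type*} [CommSemiring R] [CommRing A] [Algebra R A] {𝒜 : ℕ → Submodule R A}
  [SetLike.GradedMonoid 𝒜]

theorem prod_mem_graded_of_forall_mem_one {n : ℕ} {L : Fin n → A} (hL : ∀ k, L k ∈ 𝒜 1) :
    ∏ k, L k ∈ 𝒜 n := by
  simpa using SetLike.prod_mem_graded 𝒜 (fun _ ↦ 1) L (F := Finset.univ) fun k _ ↦ hL k

theorem mul_eq_zero_of_top_lt_add {d a b : ℕ} (htrunc : ∀ j, d < j → 𝒜 j = ⊥) {x y : A}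
    (hx : x ∈ 𝒜 a) (hy : y ∈ 𝒜 b) (hab : d < a + b) : x * y = 0 := by
  simpa [htrunc _ hab] using SetLike.mul_mem_graded hx hy

theorem mixedSL_cons_cons {d j : ℕ} {U : Set A} (hU : ∀ u ∈ U, u ∈ 𝒜 1) (hj : 2 * (j + 1) ≤ d)
    (hSL : ∀ L : Fin (d - 2 * j) → A, (∀ k, L k ∈ U) →
      (∀ α ∈ 𝒜 j, (∏ k, L k) * α = 0 → α = 0) ∧
      (∀ β ∈ 𝒜 (d - j), ∃ α ∈ 𝒜 j, (∏ k, L k) * α = β))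
    {ℓ₀ : A} (hℓ₀ : ℓ₀ ∈ U) {L : Fin (d - 2 * (j + 1)) → A} (hL : ∀ k, L k ∈ U) :
    (∀ w ∈ 𝒜 j, ℓ₀ * (∏ k, L k) * (ℓ₀ * w) = 0 → w = 0) ∧
    (∀ v ∈ 𝒜 (j + 1), ∃ w ∈ 𝒜 j, ℓ₀ * (∏ k, L k) * (ℓ₀ * w) = ℓ₀ * (∏ k, L k) * v) := by
  rw [show d - 2 * j = d - 2 * (j + 1) + 2 by omega] at hSL
  obtain ⟨hinj, hsurj⟩ := hSL (Fin.cons ℓ₀ (Fin.cons ℓ₀ L)) (by simp [Fin.forall_fin_succ, hℓ₀, hL])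
  simp only [Fin.prod_cons] at hinj hsurj
  have hdeg : ∀ v ∈ 𝒜 (j + 1), ℓ₀ * (∏ k, L k) * v ∈ 𝒜 (d - j) := fun v hv ↦ by
    convert SetLike.mul_mem_graded (SetLike.mul_mem_graded (hU ℓ₀ hℓ₀)
      (prod_mem_graded_of_forall_mem_one fun k ↦ hU _ (hL k))) hv using 2
    omega
  refine ⟨fun w hw h ↦ hinj w hw (by linear_combination h), fun v hv ↦ ?_⟩
  obtain ⟨w, hw, hwv⟩ := hsurj _ (hdeg v hv)
  exact ⟨w, hw, by linear_combination hwv⟩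

end Graded

theorem mixedStrongLefschetz_primitive_decomposition_general
    (A : Type) [CommRing A] [Algebra ℝ A]
    (𝒜 : ℕ → Submodule ℝ A) [GradedAlgebra 𝒜]
    (d : ℕ)
    (hfin : ∀ j, FiniteDimensional ℝ (𝒜 j))
    (htrunc : ∀ j, d < j → 𝒜 j = ⊥)
    (intA : A →ₗ[ℝ] ℝ)
    (U : Set A) (hU : ∀ u ∈ U, u ∈ 𝒜 1)
    (i : ℕ) (hi : i ≤ d / 2)
    -- mixed `SL_i` on `U`
    (hMSL : ∀ j, j ≤ i → ∀ L : Fin (d - 2*j) → A, (∀ k, L k ∈ U) →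
      (∀ α ∈ 𝒜 j, (∏ k, L k) * α = 0 → α = 0) ∧
      (∀ β ∈ 𝒜 (d - j), ∃ α ∈ 𝒜 j, (∏ k, L k) * α = β)) :
    ∀ j, j ≤ i → ∀ ℓ₀ ∈ U, ∀ L : Fin (d - 2*j) → A, (∀ k, L k ∈ U) →
      (Module.finrank ℝ
          ↥(𝒜 j ⊓ LinearMap.ker (LinearMap.mulLeft ℝ (ℓ₀ * ∏ k, L k)))
        = Module.finrank ℝ ↥(𝒜 j)
            - (if j = 0 then 0 else Module.finrank ℝ ↥(𝒜 (j - 1)))) ∧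
      (𝒜 j = (𝒜 j ⊓ LinearMap.ker (LinearMap.mulLeft ℝ (ℓ₀ * ∏ k, L k)))
          ⊔ (if j = 0 then ⊥ else Submodule.map (LinearMap.mulLeft ℝ ℓ₀) (𝒜 (j - 1)))) ∧
      ((𝒜 j ⊓ LinearMap.ker (LinearMap.mulLeft ℝ (ℓ₀ * ∏ k, L k)))
          ⊓ (if j = 0 then ⊥ else Submodule.map (LinearMap.mulLeft ℝ ℓ₀) (𝒜 (j - 1))) = ⊥) ∧
      (∀ α ∈ 𝒜 j ⊓ LinearMap.ker (LinearMap.mulLeft ℝ (ℓ₀ * ∏ k, L k)),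
        ∀ β ∈ (if j = 0 then (⊥ : Submodule ℝ A)
            else Submodule.map (LinearMap.mulLeft ℝ ℓ₀) (𝒜 (j - 1))),
          (-1 : ℝ) ^ j * intA ((∏ k, L k) * α * β) = 0) := by
  intro j hj ℓ₀ hℓ₀ L hL
  rcases j with _ | j
  · have hvanish : ℓ₀ * ∏ k, L k = 0 := mul_eq_zero_of_top_lt_add htrunc (hU ℓ₀ hℓ₀)
      (prod_mem_graded_of_forall_mem_one fun k ↦ hU _ (hL k)) (by omega)
    rw [hvanish, LinearMap.mulLeft_zero_eq_zero, LinearMap.ker_zero, inf_top_eq]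
    simp
  obtain ⟨hinj, hsurj⟩ := mixedSL_cons_cons hU (by omega) (hMSL j (by omega)) hℓ₀ hL
  have hmap : (𝒜 j).map (LinearMap.mulLeft ℝ ℓ₀) ≤ 𝒜 (j + 1) := by
    rintro _ ⟨w, hw, rfl⟩
    simpa [add_comm] using SetLike.mul_mem_graded (hU ℓ₀ hℓ₀) hw
  have := hfin (j + 1)
  simp only [Nat.add_one_ne_zero, if_false, add_tsub_cancel_right]
  refine ⟨Submodule.finrank_inf_ker_eq_sub hmap hinj hsurj,
    (Submodule.inf_ker_sup_map_eq hmap hsurj).symm,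
    ((Submodule.disjoint_ker_map hinj).mono_left inf_le_right).eq_bot, ?_⟩
  rintro α ⟨-, hα : ℓ₀ * (∏ k, L k) * α = 0⟩ _ ⟨γ, -, rfl⟩
  rw [LinearMap.mulLeft_apply, show (∏ k, L k) * α * (ℓ₀ * γ) = ℓ₀ * (∏ k, L k) * α * γ by ring,
    hα, zero_mul, map_zero, mul_zero]

/-- If an oriented Artinian Gorenstein algebra `(A, ∫_A)` of socle degree `d`
satisfies the mixed strong Lefschetz property `mixed SL_i` on a subset `U ⊆ A₁`, then for each
`0 ≤ j ≤ i` and each choice of `ℓ₀, ℓ₁, …, ℓ_{d−2j} ∈ U` with `ℒ = (ℓ₁, …, ℓ_{d−2j})`, the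
mixed primitive subspace `P_{j,ℓ₀}^ℒ = ker(×(ℓ₀ℓ₁⋯ℓ_{d−2j}) : A_j → A_{d−j+1})` has dimension
`h_j − h_{j−1}`, `A_j = P_{j,ℓ₀}^ℒ ⊕ ℓ₀·A_{j−1}`, and this decomposition is orthogonal with
respect to the `j`-th mixed Lefschetz form `(α,β) ↦ (−1)^j ∫_A (ℓ₁⋯ℓ_{d−2j}·α·β)`. -/
theorem mixedStrongLefschetz_primitive_decomposition
    (A : Type) [CommRing A] [Algebra ℝ A]
    (𝒜 : ℕ → Submodule ℝ A) [GradedAlgebra 𝒜]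
    (d : ℕ)
    (hfin : ∀ j, FiniteDimensional ℝ (𝒜 j))
    (htrunc : ∀ j, d < j → 𝒜 j = ⊥)
    (hone : 𝒜 0 = Submodule.span ℝ {(1 : A)})
    (intA : A →ₗ[ℝ] ℝ)
    (hnd : ∀ j, j ≤ d → ∀ α ∈ 𝒜 j, (∀ β ∈ 𝒜 (d - j), intA (α * β) = 0) → α = 0)
    (U : Set A) (hU : ∀ u ∈ U, u ∈ 𝒜 1)
    (i : ℕ) (hi : i ≤ d / 2)
    -- mixed `SL_i` on `U`
    (hMSL : ∀ j, j ≤ i → ∀ L : Fin (d - 2*j) → A, (∀ k, L k ∈ U) →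
      (∀ α ∈ 𝒜 j, (∏ k, L k) * α = 0 → α = 0) ∧
      (∀ β ∈ 𝒜 (d - j), ∃ α ∈ 𝒜 j, (∏ k, L k) * α = β)) :
    ∀ j, j ≤ i → ∀ ℓ₀ ∈ U, ∀ L : Fin (d - 2*j) → A, (∀ k, L k ∈ U) →
      (Module.finrank ℝ
          ↥(𝒜 j ⊓ LinearMap.ker (LinearMap.mulLeft ℝ (ℓ₀ * ∏ k, L k)))
        = Module.finrank ℝ ↥(𝒜 j)
            - (if j = 0 then 0 else Module.finrank ℝ ↥(𝒜 (j - 1)))) ∧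
      (𝒜 j = (𝒜 j ⊓ LinearMap.ker (LinearMap.mulLeft ℝ (ℓ₀ * ∏ k, L k)))
          ⊔ (if j = 0 then ⊥ else Submodule.map (LinearMap.mulLeft ℝ ℓ₀) (𝒜 (j - 1)))) ∧
      ((𝒜 j ⊓ LinearMap.ker (LinearMap.mulLeft ℝ (ℓ₀ * ∏ k, L k)))
          ⊓ (if j = 0 then ⊥ else Submodule.map (LinearMap.mulLeft ℝ ℓ₀) (𝒜 (j - 1))) = ⊥) ∧
      (∀ α ∈ 𝒜 j ⊓ LinearMap.ker (LinearMap.mulLeft ℝ (ℓ₀ * ∏ k, L k)),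
        ∀ β ∈ (if j = 0 then (⊥ : Submodule ℝ A)
            else Submodule.map (LinearMap.mulLeft ℝ ℓ₀) (𝒜 (j - 1))),
          (-1 : ℝ) ^ j * intA ((∏ k, L k) * α * β) = 0) :=
  mixedStrongLefschetz_primitive_decomposition_general A 𝒜 d hfin htrunc intA U hU i hi hMSL
end

section
/- Let s ≥ 1 and let a_1, …, a_s, b_1, …, b_s be nonnegative real numbers such that (a_k, b_k) ≠ (0,0) for every 1 ≤ k ≤ s. Then for every t ≥ 0 and every choice of column indices j_0 < j_1 < ⋯ < j_t in ℕ, there exist row indices i_0 < i_1 < ⋯ < i_t in ℕ with j_0 ≤ i_0 and i_t ≤ j_t + s such that the determinant of the (t+1) × (t+1) submatrix ((W_s(a,b))_{i_r, j_{r'}})_{0 ≤ r, r' ≤ t} of the weighted path matrix W_s(a,b) is strictly positive. -/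
/-- The weighted path matrix `W_s(a,b)`, indexed by `ℕ × ℕ`, whose `(p,q)` entry is
`Σ_{K ⊆ {1,…,s}, |K| = p−q} (Π_{k∈K} a_k)·(Π_{k∉K} b_k)` (zero unless `0 ≤ p−q ≤ s`). -/
noncomputable def weightedPathMatrix (s : ℕ) (a b : Fin s → ℝ) : ℕ → ℕ → ℝ :=
  fun p q =>
    ∑ K ∈ Finset.univ.filter (fun K : Finset (Fin s) => K.card + q = p),
      (∏ k ∈ K, a k) * (∏ k ∈ Kᶜ, b k)

/-!
Column `q` of `W_{s+1}(a,b)` is `b 0 • (column q of W) + a 0 • (column q+1 of W)`, where `W` is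
the weighted path matrix of `Fin.tail a, Fin.tail b`; this is read off from the generating
polynomial `X^q ∏ₖ (aₖ X + bₖ)` of column `q`. Expanding a minor multilinearly in its columns
therefore writes it as a nonnegative combination of minors of `W` with weakly increasing columns,
and induction down to `W_0 = 1` shows that all such minors are nonnegative.

For positivity, take the rows `jᵣ + d`, where `d ≤ s` counts the `k` with `bₖ = 0`. In the
expansion keep the single term in which every column makes the `b 0`-step if `b 0 > 0`, or the
`a 0`-step if `b 0 = 0` (and then `a 0 > 0`): it is a positive multiple of a minor of the same
shape for `W`, positive by induction, and all other terms are nonnegative.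
-/

open Finset Matrix Polynomial

theorem Matrix.det_of_mul_add_mul_eq_sum {n R : Type*} [Fintype n] [DecidableEq n] [CommRing R]
    (u v : n → R) (M N : Matrix n n R) :
    (of fun i j => u j * M i j + v j * N i j).det =
      ∑ S : Finset n, (∏ j, if j ∈ S then u j else v j) *
        (of fun i j => if j ∈ S then M i j else N i j).det := by
  have hcols : (of fun i j => u j * M i j + v j * N i j)ᵀ =
      (fun j => u j • Mᵀ j) + fun j => v j • Nᵀ j := by
    ext; simp
  rw [← det_transpose, hcols]
  change detRowAlternating _ = _
  rw [AlternatingMap.map_add_univ]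
  refine sum_congr rfl fun S _ => ?_
  have hpiece : S.piecewise (fun j => u j • Mᵀ j) (fun j => v j • Nᵀ j) =
      fun j => (if j ∈ S then u j else v j) • fun i => if j ∈ S then M i j else N i j := by
    ext j i
    by_cases hj : j ∈ S <;> simp [hj]
  rw [hpiece, detRowAlternating.map_smul_univ, smul_eq_mul, ← det_transpose]
  rfl

theorem det_of_ite_eq_nonneg {n : ℕ} {β : Type*} [LinearOrder β] {I J : Fin n → β}
    (hI : StrictMono I) (hJ : StrictMono J) :
    0 ≤ (of fun r c => if I r = J c then (1 : ℝ) else 0).det := by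
  by_cases hrange : ∀ r, I r ∈ image J univ
  · have hcard : #(image J univ) = n := by simp [card_image_of_injective _ hJ.injective]
    have hJmem : ∀ c, J c ∈ image J univ := fun c => mem_image_of_mem _ (mem_univ c)
    have hIJ : I = J :=
      (orderEmbOfFin_unique hcard hrange hI).trans (orderEmbOfFin_unique hcard hJmem hJ).symm
    have hone : (of fun r c => if I r = J c then (1 : ℝ) else 0) = 1 := by
      ext r c
      simp [hIJ, one_apply, hJ.injective.eq_iff]
    rw [hone, det_one]
    exact zero_le_one
  · push Not at hrange
    obtain ⟨r, hr⟩ := hrange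
    refine (det_eq_zero_of_row_eq_zero r fun c => ?_).ge
    simp only [of_apply, ite_eq_right_iff, one_ne_zero]
    intro h
    exact hr (h ▸ mem_image_of_mem _ (mem_univ c))

theorem det_nonneg_of_monotone_of_forall_strictMono {n : ℕ} {β R : Type*} [PartialOrder β]
    [CommRing R] [Preorder R] (M : Fin n → β → R)
    (h : ∀ J : Fin n → β, StrictMono J → 0 ≤ (of fun r c => M r (J c)).det)
    {J : Fin n → β} (hJ : Monotone J) : 0 ≤ (of fun r c => M r (J c)).det := by
  by_cases hJinj : Function.Injective J
  · exact h J (hJ.strictMono_of_injective hJinj)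
  · obtain ⟨c, c', hcc', hne⟩ := Function.not_injective_iff.mp hJinj
    exact (det_zero_of_column_eq hne fun r => by simp [hcc']).ge

theorem prod_ite_mem_nonneg {ι R : Type*} [Fintype ι] [DecidableEq ι] [CommSemiring R]
    [PartialOrder R] [IsOrderedRing R] (S : Finset ι) {x y : R} (hx : 0 ≤ x) (hy : 0 ≤ y) :
    0 ≤ ∏ c, if c ∈ S then x else y :=
  prod_nonneg fun c _ => by split_ifs <;> assumption

def shiftOutside {ι : Type*} [DecidableEq ι] (S : Finset ι) (J : ι → ℕ) (c : ι) : ℕ :=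
  if c ∈ S then J c else J c + 1

theorem StrictMono.monotone_shiftOutside {ι : Type*} [PartialOrder ι] [DecidableEq ι]
    {J : ι → ℕ} (hJ : StrictMono J) (S : Finset ι) : Monotone (shiftOutside S J) := by
  intro c c' hcc'
  rcases hcc'.eq_or_lt with rfl | hlt
  · rfl
  · have := hJ hlt
    unfold shiftOutside
    split_ifs <;> omega

theorem weightedPathMatrix_eq_coeff (s : ℕ) (a b : Fin s → ℝ) (p q : ℕ) :
    weightedPathMatrix s a b p q = (X ^ q * ∏ k, (C (a k) * X + C (b k))).coeff p := by
  have hprod : ∏ k, (C (a k) * X + C (b k)) =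
      ∑ K : Finset (Fin s), C ((∏ k ∈ K, a k) * ∏ k ∈ Kᶜ, b k) * X ^ #K := by
    rw [Fintype.prod_add]
    refine sum_congr rfl fun K _ => ?_
    simp only [prod_mul_distrib, prod_const, map_mul, map_prod]
    ring
  rw [hprod, mul_sum, finsetSum_coeff, weightedPathMatrix, sum_filter]
  refine sum_congr rfl fun K _ => ?_
  rw [mul_left_comm, ← pow_add, add_comm q, coeff_C_mul_X_pow]
  simp only [eq_comm]

theorem weightedPathMatrix_zero (a b : Fin 0 → ℝ) (p q : ℕ) :
    weightedPathMatrix 0 a b p q = if p = q then 1 else 0 := by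
  simp [weightedPathMatrix_eq_coeff, coeff_X_pow]

theorem weightedPathMatrix_succ (s : ℕ) (a b : Fin (s + 1) → ℝ) (p q : ℕ) :
    weightedPathMatrix (s + 1) a b p q =
      b 0 * weightedPathMatrix s (Fin.tail a) (Fin.tail b) p q +
        a 0 * weightedPathMatrix s (Fin.tail a) (Fin.tail b) p (q + 1) := by
  simp only [weightedPathMatrix_eq_coeff, Fin.prod_univ_succ, Fin.tail]
  set P := ∏ k : Fin s, (C (a k.succ) * X + C (b k.succ))
  rw [show X ^ q * ((C (a 0) * X + C (b 0)) * P) =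
      C (b 0) * (X ^ q * P) + C (a 0) * (X ^ (q + 1) * P) by ring,
    coeff_add, coeff_C_mul, coeff_C_mul]

theorem det_weightedPathMatrix_succ (s : ℕ) (a b : Fin (s + 1) → ℝ) {n : ℕ} (I J : Fin n → ℕ) :
    (of fun r c => weightedPathMatrix (s + 1) a b (I r) (J c)).det =
      ∑ S : Finset (Fin n), (∏ c, if c ∈ S then b 0 else a 0) *
        (of fun r c =>
          weightedPathMatrix s (Fin.tail a) (Fin.tail b) (I r) (shiftOutside S J c)).det := by
  set W := weightedPathMatrix s (Fin.tail a) (Fin.tail b)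
  simpa only [weightedPathMatrix_succ, shiftOutside, apply_ite, of_apply] using
    det_of_mul_add_mul_eq_sum (fun _ => b 0) (fun _ => a 0)
      (of fun r c => W (I r) (J c)) (of fun r c => W (I r) (J c + 1))

theorem det_weightedPathMatrix_nonneg (s : ℕ) (a b : Fin s → ℝ) (ha : ∀ k, 0 ≤ a k)
    (hb : ∀ k, 0 ≤ b k) {n : ℕ} {I J : Fin n → ℕ} (hI : StrictMono I) (hJ : Monotone J) :
    0 ≤ (of fun r c => weightedPathMatrix s a b (I r) (J c)).det := by
  induction s generalizing J with
  | zero =>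
    refine det_nonneg_of_monotone_of_forall_strictMono _ (fun J hJ => ?_) hJ
    simpa only [weightedPathMatrix_zero] using det_of_ite_eq_nonneg hI hJ
  | succ s ih =>
    refine det_nonneg_of_monotone_of_forall_strictMono _ (fun J hJ => ?_) hJ
    rw [det_weightedPathMatrix_succ]
    exact sum_nonneg fun S _ => mul_nonneg (prod_ite_mem_nonneg S (hb 0) (ha 0))
      (ih _ _ (fun k => ha _) (fun k => hb _) (hJ.monotone_shiftOutside S))

theorem det_weightedPathMatrix_pos (s : ℕ) (a b : Fin s → ℝ) (ha : ∀ k, 0 ≤ a k)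
    (hb : ∀ k, 0 ≤ b k) (hab : ∀ k, ¬(a k = 0 ∧ b k = 0)) {n : ℕ} {J : Fin n → ℕ}
    (hJ : StrictMono J) :
    0 < (of fun r c => weightedPathMatrix s a b (J r + #{k | b k = 0}) (J c)).det := by
  induction s generalizing J with
  | zero =>
    have hone : (of fun r c => weightedPathMatrix 0 a b (J r + #{k | b k = 0}) (J c)) = 1 := by
      ext r c
      simp [weightedPathMatrix_zero, one_apply, hJ.injective.eq_iff]
    rw [hone, det_one]
    exact one_pos
  | succ s ih =>
    rw [det_weightedPathMatrix_succ]
    refine sum_pos' (fun S _ => mul_nonneg (prod_ite_mem_nonneg S (hb 0) (ha 0))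
      (det_weightedPathMatrix_nonneg _ _ _ (fun k => ha _) (fun k => hb _) (hJ.add_const _)
        (hJ.monotone_shiftOutside S))) ?_
    have ih_tail := @ih (Fin.tail a) (Fin.tail b) (fun k => ha _) (fun k => hb _) (fun k => hab _)
    by_cases hb0 : b 0 = 0
    · have ha0 : 0 < a 0 := (ha 0).lt_of_ne' fun h => hab 0 ⟨h, hb0⟩
      have hd : #{k | b k = 0} = #{k | Fin.tail b k = 0} + 1 := by
        rw [Fin.card_filter_univ_succ, if_pos hb0]; rfl
      refine ⟨∅, mem_univ _, mul_pos (by simpa using pow_pos ha0 n) ?_⟩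
      refine (ih_tail (hJ.add_const 1)).trans_eq (congrArg det ?_)
      ext r c
      simp only [of_apply, shiftOutside, notMem_empty, if_false, hd]
      rw [add_right_comm, add_assoc]
    · have hb0' : 0 < b 0 := (hb 0).lt_of_ne' hb0
      have hd : #{k | b k = 0} = #{k | Fin.tail b k = 0} := by
        rw [Fin.card_filter_univ_succ, if_neg hb0]; rfl
      refine ⟨univ, mem_univ _, mul_pos (by simpa using pow_pos hb0' n) ?_⟩
      refine (ih_tail hJ).trans_eq (congrArg det ?_)
      ext r c
      simp only [of_apply, shiftOutside, mem_univ, if_true, hd]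

theorem weightedPathMatrix_exists_pos_minor_general
    (s : ℕ) (a b : Fin s → ℝ)
    (ha : ∀ k, 0 ≤ a k) (hb : ∀ k, 0 ≤ b k)
    (hab : ∀ k, ¬(a k = 0 ∧ b k = 0))
    (t : ℕ) (col : Fin (t + 1) → ℕ) (hcol : StrictMono col) :
    ∃ row : Fin (t + 1) → ℕ, StrictMono row ∧
      col 0 ≤ row 0 ∧ row (Fin.last t) ≤ col (Fin.last t) + s ∧
      0 < (Matrix.of fun r r' : Fin (t + 1) =>
        weightedPathMatrix s a b (row r) (col r')).det := by
  have hd : #{k | b k = 0} ≤ s := (card_filter_le _ _).trans (card_fin s).le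
  exact ⟨fun r => col r + #{k | b k = 0}, hcol.add_const _, Nat.le_add_right _ _,
    Nat.add_le_add_left hd _, det_weightedPathMatrix_pos s a b ha hb hab hcol⟩

/-- Let `s ≥ 1` and let `a₁, …, a_s, b₁, …, b_s` be nonnegative reals with
`(a_k, b_k) ≠ (0,0)` for every `k`.  Then for every `t ≥ 0` and all column indices
`j₀ < ⋯ < j_t` in `ℕ`, there exist row indices `i₀ < ⋯ < i_t` with `j₀ ≤ i₀` and
`i_t ≤ j_t + s` such that the minor `det((W_s(a,b))_{i_r, j_{r'}})` is strictly positive. -/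
theorem weightedPathMatrix_exists_pos_minor
    (s : ℕ) (hs : 1 ≤ s) (a b : Fin s → ℝ)
    (ha : ∀ k, 0 ≤ a k) (hb : ∀ k, 0 ≤ b k)
    (hab : ∀ k, ¬(a k = 0 ∧ b k = 0))
    (t : ℕ) (col : Fin (t + 1) → ℕ) (hcol : StrictMono col) :
    ∃ row : Fin (t + 1) → ℕ, StrictMono row ∧
      col 0 ≤ row 0 ∧ row (Fin.last t) ≤ col (Fin.last t) + s ∧
      0 < (Matrix.of fun r r' : Fin (t + 1) =>
        weightedPathMatrix s a b (row r) (col r')).det :=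
  weightedPathMatrix_exists_pos_minor_general s a b ha hb hab t col hcol
end
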